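/- arXiv:1304.7063 — 3 statements merged into one kernel-verified Lean document; each statement's English description precedes it below -/
import Mathlib

section
/- Let R be a ring and L, L₁, L₂, M, N, M₁, N₁ ∈ R satisfy N·L = L₁·M and N₁·L₁ = L₂·M₁. Then (N₁·N)·L = L₂·(M₁·M). Moreover, if (M, N) is replaced by an equivalent pair (M + A·L, N + L₁·A) and (M₁, N₁) by (M₁ + B·L₁, N₁ + L₂·B), then the composed pair (M₁·M, N₁·N) changes by an equivalent pair: there exists C ∈ R with the new composed first component equal to M₁·M + C·L and the new composed second component equal to N₁·N + L₂·C. -/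
/-!
Both claims are associativity plus one use of an intertwining relation. For the second, expanding
`(M₁ + B L₁)(M + A L)` and rewriting `L₁ M = N L` gives the shift `C = M₁ A + B N + B L₁ A`; expanding
`(N₁ + L₂ B)(N + L₁ A)` and rewriting `N₁ L₁ = L₂ M₁` gives the same `C`.
-/

theorem mul_mul_eq_mul_mul_of_intertwining {R : Type*} [Semigroup R] {L L₁ L₂ M N M₁ N₁ : R}
    (h1 : N * L = L₁ * M) (h2 : N₁ * L₁ = L₂ * M₁) :
    N₁ * N * L = L₂ * (M₁ * M) := by
  rw [mul_assoc, h1, ← mul_assoc, h2, mul_assoc]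

section Ring

variable {R : Type*} [Ring R]

theorem add_mul_mul_add_mul_of_intertwining {L L₁ M N : R} (h : N * L = L₁ * M) (M₁ A B : R) :
    (M₁ + B * L₁) * (M + A * L) = M₁ * M + (M₁ * A + B * N + B * L₁ * A) * L := by
  have hB : B * L₁ * M = B * N * L := by rw [mul_assoc, ← h, mul_assoc]
  simp only [mul_add, add_mul, ← mul_assoc, hB]
  abel

theorem mul_add_mul_add_mul_of_intertwining {L₁ L₂ M₁ N₁ : R} (h : N₁ * L₁ = L₂ * M₁) (N A B : R) :
    (N₁ + L₂ * B) * (N + L₁ * A) = N₁ * N + L₂ * (M₁ * A + B * N + B * L₁ * A) := by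
  have hA : N₁ * L₁ * A = L₂ * M₁ * A := by rw [h]
  simp only [mul_add, add_mul, ← mul_assoc, hA]
  abel

end Ring

theorem stmt1 {R : Type*} [Ring R] (L L₁ L₂ M N M₁ N₁ : R)
    (h1 : N * L = L₁ * M) (h2 : N₁ * L₁ = L₂ * M₁) :
    (N₁ * N) * L = L₂ * (M₁ * M) ∧
    ∀ A B : R, ∃ C : R,
      (M₁ + B * L₁) * (M + A * L) = M₁ * M + C * L ∧
      (N₁ + L₂ * B) * (N + L₁ * A) = N₁ * N + L₂ * C :=
  ⟨mul_mul_eq_mul_mul_of_intertwining h1 h2, fun A B =>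
    ⟨_, add_mul_mul_add_mul_of_intertwining h1 M₁ A B, mul_add_mul_add_mul_of_intertwining h2 N A B⟩⟩
end

section
/- Let K be a differential field with commuting derivations ∂x, ∂y, and let L = ∂x∂y + a∂x + b∂y + c with a, b, c ∈ K. Suppose M, N ∈ K[∂x,∂y] satisfy N·L = L₁·M where L₁ = ∂x∂y + a₁∂x + b₁∂y + c₁ for some a₁, b₁, c₁ ∈ K, and suppose M is a nonzero ordinary differential operator in ∂x only (M = Σᵢ mᵢ∂xⁱ with mᵢ ∈ K). Then N is also an ordinary differential operator in ∂x only: when N is written in the standard form Σ n_{ij} ∂xⁱ∂yʲ, all coefficients n_{ij} with j ≥ 1 vanish. -/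
/-!
Order the monomials `∂xⁱ∂yʲ` lexicographically, comparing the `∂y`-exponents first. Right
multiplication by `L = ∂x∂y + a∂x + b∂y + c` sends `φ(c)∂xⁱ∂yʲ` to `φ(c)∂xⁱ⁺¹∂yʲ⁺¹` plus monomials
that are componentwise, hence lexicographically, smaller. If `N` had a nonzero coefficient `n_{ij}`
with `j ≥ 1`, its lexicographically largest nonzero term `n_{id}∂xⁱ∂yᵈ` would therefore make
`N·L ≡ φ(n_{id})∂xⁱ⁺¹∂yᵈ⁺¹` modulo lower monomials, while `L₁·M` only involves `∂y⁰` and `∂y¹`.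
Since `d + 1 ≥ 2`, uniqueness of normal forms forces `n_{id} = 0`.
-/

namespace OreMonomial

variable {K R : Type*} [Ring K] [Ring R] (φ : K →+* R) (Dx Dy : R)

def monomialSpan (s : Set (ℕ × ℕ)) : AddSubgroup R :=
  AddSubgroup.closure {r | ∃ c : K, ∃ e ∈ s, φ c * Dx ^ e.1 * Dy ^ e.2 = r}

def hyperbolicOp (a b c : K) : R := Dx * Dy + φ a * Dx + φ b * Dy + φ c

def MonomialsIndependent : Prop :=
  ∀ (p : ℕ → ℕ → K) (I J : ℕ),
    (∑ i ∈ Finset.range I, ∑ j ∈ Finset.range J, φ (p i j) * Dx ^ i * Dy ^ j) = 0 →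
    ∀ i < I, ∀ j < J, p i j = 0

structure IsOrePair : Prop where
  commute : Dx * Dy = Dy * Dx
  exists_x_mul_map : ∀ f : K, ∃ g, Dx * φ f = φ f * Dx + φ g
  exists_y_mul_map : ∀ f : K, ∃ g, Dy * φ f = φ f * Dy + φ g

variable {φ Dx Dy}

theorem map_mem_of_mem_closure {G H : Type*} [AddGroup G] [AddGroup H] (f : G →+ H) {S : Set G}
    {T : AddSubgroup H} (hS : ∀ x ∈ S, f x ∈ T) {x : G} (hx : x ∈ AddSubgroup.closure S) :
    f x ∈ T :=
  (AddSubgroup.closure_le (T.comap f)).2 hS hx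

theorem monomial_mem_monomialSpan {s : Set (ℕ × ℕ)} (c : K) {e : ℕ × ℕ} (he : e ∈ s) :
    φ c * Dx ^ e.1 * Dy ^ e.2 ∈ monomialSpan φ Dx Dy s :=
  AddSubgroup.subset_closure ⟨c, e, he, rfl⟩

theorem monomialSpan_mono {s t : Set (ℕ × ℕ)} (hst : s ⊆ t) :
    monomialSpan φ Dx Dy s ≤ monomialSpan φ Dx Dy t :=
  AddSubgroup.closure_mono fun _ ⟨c, e, he, hr⟩ => ⟨c, e, hst he, hr⟩

theorem map_mul_mem_monomialSpan {s : Set (ℕ × ℕ)} (c : K) {x : R}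
    (hx : x ∈ monomialSpan φ Dx Dy s) : φ c * x ∈ monomialSpan φ Dx Dy s := by
  refine map_mem_of_mem_closure (AddMonoidHom.mulLeft (φ c)) ?_ hx
  rintro _ ⟨c', e, he, rfl⟩
  simpa [← mul_assoc] using monomial_mem_monomialSpan (φ := φ) (Dx := Dx) (Dy := Dy) (c * c') he

theorem mul_pow_mul_pow_mem_monomialSpan (hO : IsOrePair φ Dx Dy) {s t : Set (ℕ × ℕ)} {i j : ℕ}
    (hst : ∀ e ∈ s, (e.1 + i, e.2 + j) ∈ t) {x : R} (hx : x ∈ monomialSpan φ Dx Dy s) :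
    x * (Dx ^ i * Dy ^ j) ∈ monomialSpan φ Dx Dy t := by
  refine map_mem_of_mem_closure (AddMonoidHom.mulRight (Dx ^ i * Dy ^ j)) ?_ hx
  rintro _ ⟨c, e, he, rfl⟩
  have hcomm : Dy ^ e.2 * Dx ^ i = Dx ^ i * Dy ^ e.2 := Commute.pow_pow hO.commute.symm _ _
  have := monomial_mem_monomialSpan (Dx := Dx) (Dy := Dy) (φ := φ) c (hst e he)
  simpa [pow_add, mul_assoc, ← mul_assoc (Dy ^ e.2), hcomm] using this

theorem pow_mul_map_mem_closure {D : R} (hD : ∀ f : K, ∃ g, D * φ f = φ f * D + φ g) (k : ℕ)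
    (f : K) :
    D ^ k * φ f ∈ AddSubgroup.closure {r | ∃ c, ∃ i ≤ k, φ c * D ^ i = r} := by
  induction k with
  | zero => exact AddSubgroup.subset_closure ⟨f, 0, le_rfl, by simp⟩
  | succ k ih =>
    rw [pow_succ', mul_assoc]
    refine map_mem_of_mem_closure (AddMonoidHom.mulLeft D) ?_ ih
    rintro _ ⟨c, i, hi, rfl⟩
    obtain ⟨g, hg⟩ := hD c
    have hshift : D * (φ c * D ^ i) = φ c * D ^ (i + 1) + φ g * D ^ i := by
      rw [← mul_assoc, hg, add_mul, mul_assoc, ← pow_succ']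
    simp only [AddMonoidHom.coe_mulLeft, hshift]
    exact add_mem (AddSubgroup.subset_closure ⟨c, i + 1, by omega, rfl⟩)
      (AddSubgroup.subset_closure ⟨g, i, by omega, rfl⟩)

theorem pow_mul_pow_mul_map_mem_monomialSpan (hO : IsOrePair φ Dx Dy) (k l : ℕ) (f : K) :
    Dx ^ k * Dy ^ l * φ f ∈ monomialSpan φ Dx Dy (Set.Iic (k, l)) := by
  rw [mul_assoc]
  refine map_mem_of_mem_closure (AddMonoidHom.mulLeft _) ?_
    (pow_mul_map_mem_closure hO.exists_y_mul_map l f)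
  rintro _ ⟨c, j, hj, rfl⟩
  simp only [AddMonoidHom.coe_mulLeft, ← mul_assoc]
  refine map_mem_of_mem_closure (AddMonoidHom.mulRight _) ?_
    (pow_mul_map_mem_closure hO.exists_x_mul_map k c)
  rintro _ ⟨c', i, hi, rfl⟩
  exact monomial_mem_monomialSpan (e := (i, j)) c' ⟨hi, hj⟩

theorem pow_mul_pow_mul_mem_monomialSpan (hO : IsOrePair φ Dx Dy) {s t : Set (ℕ × ℕ)} {p q : ℕ}
    (hst : ∀ e ∈ s, Set.Iic (p + e.1, q + e.2) ⊆ t) {x : R} (hx : x ∈ monomialSpan φ Dx Dy s) :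
    Dx ^ p * Dy ^ q * x ∈ monomialSpan φ Dx Dy t := by
  refine map_mem_of_mem_closure (AddMonoidHom.mulLeft _) ?_ hx
  rintro _ ⟨c, e, he, rfl⟩
  simp only [AddMonoidHom.coe_mulLeft, ← mul_assoc]
  rw [mul_assoc _ (Dx ^ e.1)]
  refine mul_pow_mul_pow_mem_monomialSpan hO (fun f hf => hst e he ?_)
    (pow_mul_pow_mul_map_mem_monomialSpan hO p q c)
  exact ⟨by simpa [add_comm] using Nat.add_le_add_right hf.1 e.1,
    by simpa [add_comm] using Nat.add_le_add_right hf.2 e.2⟩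

theorem monomial_mul_hyperbolicOp_sub_mem (hO : IsOrePair φ Dx Dy) (c a b c' : K) (k l : ℕ) :
    φ c * Dx ^ k * Dy ^ l * hyperbolicOp φ Dx Dy a b c' - φ c * Dx ^ (k + 1) * Dy ^ (l + 1) ∈
      monomialSpan φ Dx Dy (Set.Iio (k + 1, l + 1)) := by
  have hcomm : Dy ^ l * Dx = Dx * Dy ^ l := Commute.pow_left hO.commute.symm l
  have hexpand : φ c * Dx ^ k * Dy ^ l * hyperbolicOp φ Dx Dy a b c' -
      φ c * Dx ^ (k + 1) * Dy ^ (l + 1) =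
      φ c * (Dx ^ k * Dy ^ l * φ a * (Dx ^ 1 * Dy ^ 0)) +
        φ c * (Dx ^ k * Dy ^ l * φ b * (Dx ^ 0 * Dy ^ 1)) + φ c * (Dx ^ k * Dy ^ l * φ c') := by
    simp only [hyperbolicOp, pow_succ, pow_zero, one_mul, mul_one, mul_add, mul_assoc]
    rw [← mul_assoc (Dy ^ l) Dx, hcomm]
    simp only [mul_assoc]
    abel
  have hIic : Set.Iic (k, l) ⊆ Set.Iio (k + 1, l + 1) := fun e he =>
    lt_of_le_of_lt he (Prod.mk_lt_mk_of_lt_of_le (Nat.lt_succ_self k) (Nat.le_succ l))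
  rw [hexpand]
  refine add_mem (add_mem ?_ ?_) ?_ <;> refine map_mul_mem_monomialSpan c ?_
  · refine mul_pow_mul_pow_mem_monomialSpan hO (fun e he => ?_)
      (pow_mul_pow_mul_map_mem_monomialSpan hO k l a)
    exact Prod.mk_lt_mk_of_le_of_lt (by simpa using he.1) (by simpa using Nat.lt_succ_of_le he.2)
  · refine mul_pow_mul_pow_mem_monomialSpan hO (fun e he => ?_)
      (pow_mul_pow_mul_map_mem_monomialSpan hO k l b)
    exact Prod.mk_lt_mk_of_lt_of_le (by simpa using Nat.lt_succ_of_le he.1) (by simpa using he.2)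
  · exact monomialSpan_mono hIic (pow_mul_pow_mul_map_mem_monomialSpan hO k l c')

def lexBelow (e : ℕ × ℕ) : Set (ℕ × ℕ) := {f | toLex f.swap < toLex e.swap}

theorem notMem_lexBelow_self (e : ℕ × ℕ) : e ∉ lexBelow e :=
  lt_irrefl (toLex e.swap)

theorem Iio_subset_lexBelow (e : ℕ × ℕ) : Set.Iio e ⊆ lexBelow e := fun _ hf =>
  Prod.Lex.toLex_strictMono (Prod.swap_lt_swap.2 hf)

theorem lexBelow_subset_lexBelow {e e' : ℕ × ℕ} (h : e ∈ lexBelow e') :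
    lexBelow e ⊆ lexBelow e' := fun f (hf : toLex f.swap < toLex e.swap) => hf.trans h

theorem add_one_mem_lexBelow {k l i d : ℕ} (h : (k, l) ∈ lexBelow (i, d)) :
    (k + 1, l + 1) ∈ lexBelow (i + 1, d + 1) := by
  simp only [lexBelow, Set.mem_ofPred_eq, Prod.swap_prod_mk, Prod.Lex.toLex_lt_toLex] at h ⊢
  omega

theorem mul_hyperbolicOp_mem_lexBelow (hO : IsOrePair φ Dx Dy) (a b c : K) {i d : ℕ} {Y : R}
    (hY : Y ∈ monomialSpan φ Dx Dy (lexBelow (i, d))) :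
    Y * hyperbolicOp φ Dx Dy a b c ∈ monomialSpan φ Dx Dy (lexBelow (i + 1, d + 1)) := by
  refine map_mem_of_mem_closure (AddMonoidHom.mulRight _) ?_ hY
  rintro _ ⟨c', ⟨k, l⟩, hkl, rfl⟩
  have hlead := add_one_mem_lexBelow hkl
  show φ c' * Dx ^ k * Dy ^ l * _ ∈ _
  rw [← sub_add_cancel (_ * _) (φ c' * Dx ^ (k + 1) * Dy ^ (l + 1))]
  refine add_mem (monomialSpan_mono ?_ (monomial_mul_hyperbolicOp_sub_mem hO c' a b c k l))
    (monomial_mem_monomialSpan c' hlead)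
  exact (Iio_subset_lexBelow _).trans (lexBelow_subset_lexBelow hlead)

theorem mul_hyperbolicOp_sub_mem_lexBelow (hO : IsOrePair φ Dx Dy) (a b c : K) {i d : ℕ} {X : R}
    {c₀ : K}
    (hX : X - φ c₀ * Dx ^ i * Dy ^ d ∈ monomialSpan φ Dx Dy (lexBelow (i, d))) :
    X * hyperbolicOp φ Dx Dy a b c - φ c₀ * Dx ^ (i + 1) * Dy ^ (d + 1) ∈
      monomialSpan φ Dx Dy (lexBelow (i + 1, d + 1)) := by
  have hsplit : X * hyperbolicOp φ Dx Dy a b c - φ c₀ * Dx ^ (i + 1) * Dy ^ (d + 1) =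
      (X - φ c₀ * Dx ^ i * Dy ^ d) * hyperbolicOp φ Dx Dy a b c +
        (φ c₀ * Dx ^ i * Dy ^ d * hyperbolicOp φ Dx Dy a b c -
          φ c₀ * Dx ^ (i + 1) * Dy ^ (d + 1)) := by
    rw [sub_mul]; abel
  rw [hsplit]
  exact add_mem (mul_hyperbolicOp_mem_lexBelow hO a b c hX)
    (monomialSpan_mono (Iio_subset_lexBelow _)
      (monomial_mul_hyperbolicOp_sub_mem hO c₀ a b c i d))

theorem hyperbolicOp_mul_mem (hO : IsOrePair φ Dx Dy) (a b c : K) {x : R}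
    (hx : x ∈ monomialSpan φ Dx Dy {e | e.2 = 0}) :
    hyperbolicOp φ Dx Dy a b c * x ∈ monomialSpan φ Dx Dy {e | e.2 ≤ 1} := by
  have hmul : ∀ p q : ℕ, q ≤ 1 → Dx ^ p * Dy ^ q * x ∈ monomialSpan φ Dx Dy {e | e.2 ≤ 1} :=
    fun p q hq => pow_mul_pow_mul_mem_monomialSpan hO
      (fun e (he : e.2 = 0) f hf => show f.2 ≤ 1 from hf.2.trans (by simpa [he] using hq)) hx
  have hexpand : hyperbolicOp φ Dx Dy a b c * x = Dx ^ 1 * Dy ^ 1 * x +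
      φ a * (Dx ^ 1 * Dy ^ 0 * x) + φ b * (Dx ^ 0 * Dy ^ 1 * x) + φ c * (Dx ^ 0 * Dy ^ 0 * x) := by
    simp only [hyperbolicOp, pow_one, pow_zero, one_mul, mul_one, add_mul, mul_assoc]
  rw [hexpand]
  exact add_mem (add_mem (add_mem (hmul 1 1 le_rfl)
    (map_mul_mem_monomialSpan a (hmul 1 0 zero_le_one)))
    (map_mul_mem_monomialSpan b (hmul 0 1 le_rfl)))
    (map_mul_mem_monomialSpan c (hmul 0 0 zero_le_one))

variable (φ Dx Dy) in
noncomputable def ofCoeffs : (ℕ × ℕ →₀ K) →+ R :=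
  Finsupp.liftAddHom fun e => (AddMonoidHom.mulRight (Dx ^ e.1 * Dy ^ e.2)).comp φ.toAddMonoidHom

theorem ofCoeffs_single (e : ℕ × ℕ) (c : K) :
    ofCoeffs φ Dx Dy (Finsupp.single e c) = φ c * Dx ^ e.1 * Dy ^ e.2 := by
  simp [ofCoeffs, mul_assoc]

theorem exists_ofCoeffs_eq_of_mem {s : Set (ℕ × ℕ)} {x : R} (hx : x ∈ monomialSpan φ Dx Dy s) :
    ∃ p : ℕ × ℕ →₀ K, ↑p.support ⊆ s ∧ ofCoeffs φ Dx Dy p = x := by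
  classical
  induction hx using AddSubgroup.closure_induction with
  | mem _ h =>
    obtain ⟨c, e, he, rfl⟩ := h
    refine ⟨Finsupp.single e c, fun f hf => ?_, ofCoeffs_single e c⟩
    rw [Finset.mem_coe, Finsupp.mem_support_single] at hf
    exact hf.1 ▸ he
  | zero => exact ⟨0, by simp, map_zero _⟩
  | add _ _ _ _ hx hy =>
    obtain ⟨p, hps, rfl⟩ := hx
    obtain ⟨q, hqs, rfl⟩ := hy
    refine ⟨p + q, fun f hf => ?_, map_add _ p q⟩
    rcases Finset.mem_union.1 (Finsupp.support_add hf) with h | h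
    exacts [hps h, hqs h]
  | neg _ _ hx =>
    obtain ⟨p, hps, rfl⟩ := hx
    exact ⟨-p, by simpa using hps, map_neg _ p⟩

theorem ofCoeffs_eq_zero (hindep : MonomialsIndependent φ Dx Dy) {p : ℕ × ℕ →₀ K}
    (hp : ofCoeffs φ Dx Dy p = 0) : p = 0 := by
  set B := p.support.sup (fun e => max e.1 e.2) + 1
  have hbound : ∀ e ∈ p.support, e.1 < B ∧ e.2 < B := fun e he => by
    have := Finset.le_sup (f := fun e => max e.1 e.2) he
    omega
  have hsupp : p.support ⊆ Finset.range B ×ˢ Finset.range B := fun e he => by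
    simpa using hbound e he
  have hsum : ofCoeffs φ Dx Dy p =
      ∑ i ∈ Finset.range B, ∑ j ∈ Finset.range B, φ (p (i, j)) * Dx ^ i * Dy ^ j := by
    rw [ofCoeffs, Finsupp.liftAddHom_apply, Finsupp.sum_of_support_subset p hsupp _ (by simp),
      Finset.sum_product]
    simp [mul_assoc]
  ext e
  by_contra hne
  have he := hbound e (Finsupp.mem_support_iff.2 hne)
  exact hne (hindep (fun i j => p (i, j)) B B (hsum ▸ hp) e.1 he.1 e.2 he.2)

theorem eq_zero_of_monomial_mem (hindep : MonomialsIndependent φ Dx Dy) {s : Set (ℕ × ℕ)}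
    {e : ℕ × ℕ} (he : e ∉ s) {c : K}
    (h : φ c * Dx ^ e.1 * Dy ^ e.2 ∈ monomialSpan φ Dx Dy s) : c = 0 := by
  obtain ⟨p, hps, hp⟩ := exists_ofCoeffs_eq_of_mem h
  have hp' : p = Finsupp.single e c :=
    sub_eq_zero.1 (ofCoeffs_eq_zero hindep (by rw [map_sub, hp, ofCoeffs_single, sub_self]))
  have hpe : p e = 0 := Finsupp.notMem_support_iff.1 fun hmem => he (hps hmem)
  simpa [hp'] using hpe

theorem sum_sub_monomial_mem {s : Finset (ℕ × ℕ)} {t : Set (ℕ × ℕ)} (p : ℕ × ℕ → K)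
    {e₀ : ℕ × ℕ} (he₀ : e₀ ∈ s) (hst : ∀ e ∈ s, e ≠ e₀ → p e ≠ 0 → e ∈ t) :
    ∑ e ∈ s, φ (p e) * Dx ^ e.1 * Dy ^ e.2 - φ (p e₀) * Dx ^ e₀.1 * Dy ^ e₀.2 ∈
      monomialSpan φ Dx Dy t := by
  classical
  rw [← Finset.add_sum_erase s _ he₀, add_sub_cancel_left]
  refine AddSubgroup.sum_mem _ fun e he => ?_
  obtain ⟨hne, hes⟩ := Finset.mem_erase.1 he
  by_cases hpe : p e = 0
  · simp [hpe]
  · exact monomial_mem_monomialSpan _ (hst e hes hne hpe)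

theorem ordinary_mem_monomialSpan (m : ℕ → K) (N : ℕ) :
    ∑ i ∈ Finset.range N, φ (m i) * Dx ^ i ∈ monomialSpan φ Dx Dy {e | e.2 = 0} :=
  AddSubgroup.sum_mem _ fun k _ => by
    simpa using monomial_mem_monomialSpan (φ := φ) (Dx := Dx) (Dy := Dy) (m k)
      (show (k, 0) ∈ {e : ℕ × ℕ | e.2 = 0} from rfl)

theorem exists_lexLeading_monomial (n : ℕ → ℕ → K) {I J i₀ j₀ : ℕ} (hi₀ : i₀ < I) (hj₀ : j₀ < J)
    (hj₀1 : 1 ≤ j₀) (hn₀ : n i₀ j₀ ≠ 0) :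
    ∃ i d, 1 ≤ d ∧ n i d ≠ 0 ∧
      (∑ k ∈ Finset.range I, ∑ l ∈ Finset.range J, φ (n k l) * Dx ^ k * Dy ^ l) -
        φ (n i d) * Dx ^ i * Dy ^ d ∈ monomialSpan φ Dx Dy (lexBelow (i, d)) := by
  classical
  set S := (Finset.range I ×ˢ Finset.range J).filter fun e => 1 ≤ e.2 ∧ n e.1 e.2 ≠ 0
  obtain ⟨⟨i, d⟩, hmem, hmax⟩ :=
    S.exists_max_image (fun e => toLex e.swap) ⟨(i₀, j₀), by simp [S, *]⟩
  simp only [S, Finset.mem_filter, Finset.mem_product, Finset.mem_range] at hmem hmax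
  refine ⟨i, d, hmem.2.1, hmem.2.2, ?_⟩
  rw [← Finset.sum_product (f := fun e => φ (n e.1 e.2) * Dx ^ e.1 * Dy ^ e.2)]
  refine sum_sub_monomial_mem (fun e => n e.1 e.2) (e₀ := (i, d))
    (Finset.mem_product.2 ⟨Finset.mem_range.2 hmem.1.1, Finset.mem_range.2 hmem.1.2⟩)
    fun e he hne hn => ?_
  rw [Finset.mem_product, Finset.mem_range, Finset.mem_range] at he
  rcases Nat.eq_zero_or_pos e.2 with h0 | h1
  · simp only [lexBelow, Set.mem_ofPred_eq, Prod.Lex.toLex_lt_toLex, Prod.fst_swap, Prod.snd_swap,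
      h0]
    omega
  · refine lt_of_le_of_ne (hmax e ⟨he, h1, hn⟩) fun heq => hne ?_
    simpa using congrArg (fun x => (ofLex x).swap) heq

end OreMonomial

open OreMonomial

theorem stmt9_general {K R : Type*} [Field K] [Ring R]
    (dx dy : K →+ K)
    (φ : K →+* R) (Dx Dy : R)
    (hDx : ∀ f : K, Dx * φ f = φ f * Dx + φ (dx f))
    (hDy : ∀ f : K, Dy * φ f = φ f * Dy + φ (dy f))
    (hD : Dx * Dy = Dy * Dx)
    (hindep : ∀ (p : ℕ → ℕ → K) (I J : ℕ),
      (∑ i ∈ Finset.range I, ∑ j ∈ Finset.range J, φ (p i j) * Dx ^ i * Dy ^ j) = 0 →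
      ∀ i < I, ∀ j < J, p i j = 0)
    (a b c a₁ b₁ c₁ : K) (m : ℕ → K) (dM : ℕ) (n : ℕ → ℕ → K) (I J : ℕ)
    (hrel : (∑ i ∈ Finset.range I, ∑ j ∈ Finset.range J, φ (n i j) * Dx ^ i * Dy ^ j)
          * (Dx * Dy + φ a * Dx + φ b * Dy + φ c)
        = (Dx * Dy + φ a₁ * Dx + φ b₁ * Dy + φ c₁)
          * (∑ i ∈ Finset.range (dM + 1), φ (m i) * Dx ^ i)) :
    ∀ i < I, ∀ j < J, 1 ≤ j → n i j = 0 := by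
  have hO : IsOrePair φ Dx Dy := ⟨hD, fun f => ⟨_, hDx f⟩, fun f => ⟨_, hDy f⟩⟩
  by_contra! hne
  obtain ⟨i₀, hi₀, j₀, hj₀, hj₀1, hn₀⟩ := hne
  obtain ⟨i, d, hd, hnd, hN⟩ :=
    exists_lexLeading_monomial (φ := φ) (Dx := Dx) (Dy := Dy) n hi₀ hj₀ hj₀1 hn₀
  change _ * hyperbolicOp φ Dx Dy a b c = hyperbolicOp φ Dx Dy a₁ b₁ c₁ * _ at hrel
  have hRHS := hyperbolicOp_mul_mem hO a₁ b₁ c₁ (ordinary_mem_monomialSpan m (dM + 1))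
  rw [← hrel] at hRHS
  have hlow : {e : ℕ × ℕ | e.2 ≤ 1} ⊆ lexBelow (i + 1, d + 1) := fun e (he : e.2 ≤ 1) => by
    simp only [lexBelow, Set.mem_ofPred_eq, Prod.Lex.toLex_lt_toLex, Prod.fst_swap, Prod.snd_swap]
    omega
  have hlead := sub_mem (monomialSpan_mono hlow hRHS)
    (mul_hyperbolicOp_sub_mem_lexBelow hO a b c hN)
  rw [sub_sub_cancel] at hlead
  exact hnd (eq_zero_of_monomial_mem hindep (notMem_lexBelow_self _) hlead)

theorem stmt9 {K R : Type*} [Field K] [Ring R]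
    (dx dy : K →+ K)
    (hdx : ∀ f g : K, dx (f * g) = f * dx g + dx f * g)
    (hdy : ∀ f g : K, dy (f * g) = f * dy g + dy f * g)
    (hcomm : ∀ f : K, dx (dy f) = dy (dx f))
    (φ : K →+* R) (Dx Dy : R)
    (hDx : ∀ f : K, Dx * φ f = φ f * Dx + φ (dx f))
    (hDy : ∀ f : K, Dy * φ f = φ f * Dy + φ (dy f))
    (hD : Dx * Dy = Dy * Dx)
    (hindep : ∀ (p : ℕ → ℕ → K) (I J : ℕ),
      (∑ i ∈ Finset.range I, ∑ j ∈ Finset.range J, φ (p i j) * Dx ^ i * Dy ^ j) = 0 →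
      ∀ i < I, ∀ j < J, p i j = 0)
    (a b c a₁ b₁ c₁ : K) (m : ℕ → K) (dM : ℕ) (n : ℕ → ℕ → K) (I J : ℕ)
    (hM0 : (∑ i ∈ Finset.range (dM + 1), φ (m i) * Dx ^ i) ≠ 0)
    (hrel : (∑ i ∈ Finset.range I, ∑ j ∈ Finset.range J, φ (n i j) * Dx ^ i * Dy ^ j)
          * (Dx * Dy + φ a * Dx + φ b * Dy + φ c)
        = (Dx * Dy + φ a₁ * Dx + φ b₁ * Dy + φ c₁)
          * (∑ i ∈ Finset.range (dM + 1), φ (m i) * Dx ^ i)) :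
    ∀ i < I, ∀ j < J, 1 ≤ j → n i j = 0 :=
  stmt9_general dx dy φ Dx Dy hDx hDy hD hindep a b c a₁ b₁ c₁ m dM n I J hrel
end

section
/- Let K be a differential field with commuting derivations ∂x, ∂y, let L = ∂x∂y + a∂x + b∂y + c with a, b, c ∈ K and Laplace invariant k = ∂y(b) + ab − c ≠ 0. Let M = M^y + m₀ + M^x where M^y = Σ_{j=1}^{d₂} βⱼ∂yʲ with β_{d₂} ≠ 0 and M^x = Σ_{i=1}^{d₁} αᵢ∂xⁱ. Then there exist an operator A ∈ K[∂y] of order d₂ − 1 and r ∈ K such that M·(∂x + b) − A·L = (M^x + m₀ + r)·(∂x + b) + A·k, and consequently the projection of M·(∂x + b) modulo left multiples of L has bi-degree (d₁ + 1, d₂ − 1). -/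
/-!
Since `L = (∂y + a)(∂x + b) - k`, right division of `M^y` by `∂y + a` inside `K[∂y]` gives
`M^y = A (∂y + a) + r` with `A` of order `d₂ - 1` and the leading coefficient of `M^y`. Then
`M (∂x + b) - A L = (M^x + m₀ + r)(∂x + b) + A k`, where the first summand is a pure
`∂x`-operator of order `d₁ + 1` and the second a pure `∂y`-operator of order `d₂ - 1` with
leading coefficient `γ_{d₂-1} k ≠ 0`.
-/

open Finset

section PolyOfDeg

variable {K R : Type*} [Ring K] [Ring R]

/-- `P` is an operator of `K[D]` of order at most `n` with `D ^ n`-coefficient `l`. As `R` is an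
arbitrary ring the coefficients need not be unique, so `l` is witnessed rather than read off. -/
def IsPolyOfDeg (φ : K →+* R) (D : R) (n : ℕ) (l : K) (P : R) : Prop :=
  ∃ c : ℕ → K, c n = l ∧ P = ∑ j ∈ range (n + 1), φ (c j) * D ^ j

variable {φ : K →+* R} {D P Q : R} {n : ℕ} {l q : K}

lemma isPolyOfDeg_monomial (n : ℕ) (f : K) : IsPolyOfDeg φ D n f (φ f * D ^ n) :=
  ⟨fun j => if j = n then f else 0, by simp, by simp [apply_ite φ, ite_mul]⟩

lemma IsPolyOfDeg.add (hP : IsPolyOfDeg φ D n l P) (hQ : IsPolyOfDeg φ D n q Q) :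
    IsPolyOfDeg φ D n (l + q) (P + Q) := by
  obtain ⟨c, rfl, rfl⟩ := hP
  obtain ⟨c', rfl, rfl⟩ := hQ
  exact ⟨c + c', rfl, by simp [sum_add_distrib, add_mul]⟩

lemma IsPolyOfDeg.sub (hP : IsPolyOfDeg φ D n l P) (hQ : IsPolyOfDeg φ D n q Q) :
    IsPolyOfDeg φ D n (l - q) (P - Q) := by
  obtain ⟨c, rfl, rfl⟩ := hP
  obtain ⟨c', rfl, rfl⟩ := hQ
  exact ⟨c - c', rfl, by simp [sum_sub_distrib, sub_mul]⟩

lemma IsPolyOfDeg.sum {ι : Type*} (s : Finset ι) {l : ι → K} {P : ι → R}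
    (h : ∀ i ∈ s, IsPolyOfDeg φ D n (l i) (P i)) :
    IsPolyOfDeg φ D n (∑ i ∈ s, l i) (∑ i ∈ s, P i) := by
  classical
  induction s using Finset.induction_on with
  | empty => simpa using isPolyOfDeg_monomial (φ := φ) (D := D) n 0
  | insert i s hi ih =>
    rw [sum_insert hi, sum_insert hi]
    exact (h i (mem_insert_self i s)).add (ih fun j hj => h j (mem_insert_of_mem hj))

lemma IsPolyOfDeg.map_mul (f : K) (hP : IsPolyOfDeg φ D n l P) :
    IsPolyOfDeg φ D n (f * l) (φ f * P) := by
  obtain ⟨c, rfl, rfl⟩ := hP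
  exact ⟨fun j => f * c j, rfl, by simp [mul_sum, mul_assoc]⟩

lemma IsPolyOfDeg.lift {m : ℕ} (hP : IsPolyOfDeg φ D m l P) (hmn : m ≤ n) :
    IsPolyOfDeg φ D n (if m = n then l else 0) P := by
  obtain ⟨c, rfl, rfl⟩ := hP
  refine ⟨fun j => if j ≤ m then c j else 0, ?_, ?_⟩
  · show (if n ≤ m then c n else 0) = if m = n then c m else 0
    split_ifs with h₁ h₂ <;> first | rfl | (subst h₂; rfl) | omega
  · calc ∑ j ∈ range (m + 1), φ (c j) * D ^ j
        = ∑ j ∈ range (m + 1), φ (if j ≤ m then c j else 0) * D ^ j :=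
          sum_congr rfl fun j hj => by rw [if_pos (mem_range_succ_iff.1 hj)]
      _ = _ := sum_subset (range_subset_range.2 (by omega)) fun j _ hj => by
          rw [if_neg (by simpa [Nat.lt_succ_iff] using hj), map_zero, zero_mul]

lemma IsPolyOfDeg.eq_map_of_zero (hP : IsPolyOfDeg φ D 0 l P) : P = φ l := by
  obtain ⟨c, rfl, rfl⟩ := hP
  simp

lemma IsPolyOfDeg.exists_of_succ_zero (hP : IsPolyOfDeg φ D (n + 1) 0 P) :
    ∃ l, IsPolyOfDeg φ D n l P := by
  obtain ⟨c, hc, rfl⟩ := hP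
  exact ⟨c n, c, rfl, by simp [sum_range_succ _ (n + 1), hc]⟩

lemma IsPolyOfDeg.mul_self (hP : IsPolyOfDeg φ D n l P) : IsPolyOfDeg φ D (n + 1) l (P * D) := by
  obtain ⟨c, rfl, rfl⟩ := hP
  refine ⟨fun j => if j = 0 then 0 else c (j - 1), by simp, ?_⟩
  simp [sum_range_succ' _ (n + 1), sum_mul, pow_succ, mul_assoc]

lemma IsPolyOfDeg.mul_pow (hP : IsPolyOfDeg φ D n l P) (j : ℕ) :
    IsPolyOfDeg φ D (n + j) l (P * D ^ j) := by
  induction j with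
  | zero => simpa using hP
  | succ j ih =>
    rw [pow_succ, ← mul_assoc]
    exact ih.mul_self

section Commutation

variable {d : K → K}

lemma isPolyOfDeg_self_mul_map (hD : ∀ f, D * φ f = φ f * D + φ (d f)) (f : K) :
    IsPolyOfDeg φ D 1 f (D * φ f) :=
  ⟨fun j => if j = 0 then d f else f, rfl, by simp [sum_range_succ, hD, add_comm]⟩

lemma IsPolyOfDeg.self_mul (hD : ∀ f, D * φ f = φ f * D + φ (d f))
    (hP : IsPolyOfDeg φ D n l P) : IsPolyOfDeg φ D (n + 1) l (D * P) := by
  obtain ⟨c, rfl, rfl⟩ := hP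
  convert IsPolyOfDeg.sum (range (n + 1)) fun j hj =>
    ((isPolyOfDeg_self_mul_map hD (c j)).mul_pow j).lift (n := n + 1)
      (by simpa [add_comm] using mem_range_succ_iff.1 hj) using 1
  · simp [add_comm 1]
  · simp [mul_sum, mul_assoc]

lemma isPolyOfDeg_pow_mul_map (hD : ∀ f, D * φ f = φ f * D + φ (d f)) (n : ℕ) (f : K) :
    IsPolyOfDeg φ D n f (D ^ n * φ f) := by
  induction n with
  | zero => simpa using isPolyOfDeg_monomial (φ := φ) (D := D) 0 f
  | succ n ih => simpa [pow_succ', mul_assoc] using ih.self_mul hD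

lemma IsPolyOfDeg.mul_map (hD : ∀ f, D * φ f = φ f * D + φ (d f))
    (hP : IsPolyOfDeg φ D n l P) (f : K) : IsPolyOfDeg φ D n (l * f) (P * φ f) := by
  obtain ⟨c, rfl, rfl⟩ := hP
  convert IsPolyOfDeg.sum (range (n + 1)) fun j hj =>
    ((isPolyOfDeg_pow_mul_map hD j f).map_mul (c j)).lift (mem_range_succ_iff.1 hj) using 1
  · simp
  · simp [sum_mul, mul_assoc]

lemma IsPolyOfDeg.mul_add_map (hD : ∀ f, D * φ f = φ f * D + φ (d f))
    (hP : IsPolyOfDeg φ D n l P) (b : K) : IsPolyOfDeg φ D (n + 1) l (P * (D + φ b)) := by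
  simpa [mul_add] using hP.mul_self.add ((hP.mul_map hD b).lift n.le_succ)

lemma IsPolyOfDeg.exists_eq_mul_add_map (hD : ∀ f, D * φ f = φ f * D + φ (d f)) (a : K) :
    ∀ {n : ℕ} {l : K} {P : R}, IsPolyOfDeg φ D (n + 1) l P →
      ∃ A r, IsPolyOfDeg φ D n l A ∧ P = A * (D + φ a) + φ r := by
  intro n
  induction n with
  | zero =>
    intro l P hP
    obtain ⟨q, hQ⟩ := (by simpa using hP.sub ((isPolyOfDeg_monomial 0 l).mul_add_map hD a) :
      IsPolyOfDeg φ D 1 0 _).exists_of_succ_zero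
    exact ⟨_, q, isPolyOfDeg_monomial 0 l, by rw [← hQ.eq_map_of_zero, pow_zero, mul_one]; abel⟩
  | succ n ih =>
    intro l P hP
    obtain ⟨q, hQ⟩ := (by simpa using hP.sub ((isPolyOfDeg_monomial (n + 1) l).mul_add_map hD a) :
      IsPolyOfDeg φ D (n + 2) 0 _).exists_of_succ_zero
    obtain ⟨A, r, hA, hQA⟩ := ih hQ
    refine ⟨A + φ l * D ^ (n + 1), r,
      by simpa using (hA.lift n.le_succ).add (isPolyOfDeg_monomial (n + 1) l), ?_⟩
    rw [add_mul, add_right_comm, ← hQA]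
    abel

end Commutation

lemma IsPolyOfDeg.exists_eq_map_add_sum (hP : IsPolyOfDeg φ D n l P) :
    ∃ (m : K) (c : ℕ → K), c n = l ∧ P = φ m + ∑ i ∈ range n, φ (c (i + 1)) * D ^ (i + 1) := by
  obtain ⟨c, hc, rfl⟩ := hP
  exact ⟨c 0, c, hc, by simp [sum_range_succ', add_comm]⟩

lemma isPolyOfDeg_map_add_sum (hn : n ≠ 0) (m : K) (c : ℕ → K) :
    IsPolyOfDeg φ D n (c n) (φ m + ∑ i ∈ range n, φ (c (i + 1)) * D ^ (i + 1)) :=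
  ⟨Function.update c 0 m, by simp [hn], by simp [sum_range_succ', add_comm]⟩

end PolyOfDeg

lemma add_map_mul_add_map {K R : Type*} [Ring K] [Ring R] {φ : K →+* R} {Dx Dy : R}
    {d : K → K} (hDy : ∀ f, Dy * φ f = φ f * Dy + φ (d f)) (hD : Dx * Dy = Dy * Dx) (a b : K) :
    (Dy + φ a) * (Dx + φ b) = Dx * Dy + φ a * Dx + φ b * Dy + φ (d b + a * b) := by
  rw [add_mul, mul_add, mul_add, hDy, hD, map_add, map_mul]
  abel

theorem stmt10_general {K R : Type*} [Field K] [Ring R]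
    (dx dy : K →+ K)
    (φ : K →+* R) (Dx Dy : R)
    (hDx : ∀ f : K, Dx * φ f = φ f * Dx + φ (dx f))
    (hDy : ∀ f : K, Dy * φ f = φ f * Dy + φ (dy f))
    (hD : Dx * Dy = Dy * Dx)
    (a b c : K) (hk : dy b + a * b - c ≠ 0)
    (d₁ d₂ : ℕ) (hd₁ : 1 ≤ d₁) (hd₂ : 1 ≤ d₂)
    (α β : ℕ → K) (m₀ : K) (hα : α d₁ ≠ 0) (hβ : β d₂ ≠ 0)
    (Mx My M L : R)
    (hMx : Mx = ∑ i ∈ Finset.range d₁, φ (α (i + 1)) * Dx ^ (i + 1))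
    (hMy : My = ∑ j ∈ Finset.range d₂, φ (β (j + 1)) * Dy ^ (j + 1))
    (hM : M = Mx + My + φ m₀)
    (hL : L = Dx * Dy + φ a * Dx + φ b * Dy + φ c) :
    ∃ (γ : ℕ → K) (r : K),
      γ (d₂ - 1) ≠ 0 ∧
      (M * (Dx + φ b) - (∑ j ∈ Finset.range d₂, φ (γ j) * Dy ^ j) * L
        = (Mx + φ m₀ + φ r) * (Dx + φ b)
          + (∑ j ∈ Finset.range d₂, φ (γ j) * Dy ^ j) * φ (dy b + a * b - c)) ∧
      ∃ (α' β' : ℕ → K) (m' : K),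
        α' (d₁ + 1) ≠ 0 ∧ (1 ≤ d₂ - 1 → β' (d₂ - 1) ≠ 0) ∧
        M * (Dx + φ b) - (∑ j ∈ Finset.range d₂, φ (γ j) * Dy ^ j) * L
          = φ m' + (∑ i ∈ Finset.range (d₁ + 1), φ (α' (i + 1)) * Dx ^ (i + 1))
              + (∑ j ∈ Finset.range (d₂ - 1), φ (β' (j + 1)) * Dy ^ (j + 1)) := by
  obtain ⟨n, rfl⟩ : ∃ n, d₂ = n + 1 := ⟨d₂ - 1, by omega⟩
  simp only [Nat.add_sub_cancel]
  set k := dy b + a * b - c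
  have hMy' : IsPolyOfDeg φ Dy (n + 1) (β (n + 1)) My := by
    simpa [hMy] using isPolyOfDeg_map_add_sum (φ := φ) (D := Dy) n.succ_ne_zero 0 β
  obtain ⟨_, r, ⟨γ, hγ, rfl⟩, hMyA⟩ := hMy'.exists_eq_mul_add_map hDy a
  have hL' : L = (Dy + φ a) * (Dx + φ b) - φ k := by
    rw [add_map_mul_add_map hDy hD, hL, map_sub, map_add]
    abel
  have hfac : M * (Dx + φ b) - (∑ j ∈ range (n + 1), φ (γ j) * Dy ^ j) * L
      = (Mx + φ m₀ + φ r) * (Dx + φ b) + (∑ j ∈ range (n + 1), φ (γ j) * Dy ^ j) * φ k := by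
    rw [hM, hMyA, hL']
    noncomm_ring
  refine ⟨γ, r, hγ ▸ hβ, hfac, ?_⟩
  have hN : IsPolyOfDeg φ Dx d₁ (α d₁) (Mx + φ m₀ + φ r) := by
    have := isPolyOfDeg_map_add_sum (φ := φ) (D := Dx) (by omega : d₁ ≠ 0) (m₀ + r) α
    rwa [map_add, ← hMx, add_comm, ← add_assoc] at this
  obtain ⟨mx, α', hα', hX⟩ := (hN.mul_add_map hDx b).exists_eq_map_add_sum
  have hA : IsPolyOfDeg φ Dy n (γ n) (∑ j ∈ range (n + 1), φ (γ j) * Dy ^ j) := ⟨γ, rfl, rfl⟩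
  obtain ⟨my, β', hβ', hY⟩ := (hA.mul_map hDy k).exists_eq_map_add_sum
  refine ⟨α', β', mx + my, hα' ▸ hα, fun _ => hβ' ▸ mul_ne_zero (hγ ▸ hβ) hk, ?_⟩
  rw [hfac, hX, hY, map_add]
  abel

theorem stmt10 {K R : Type*} [Field K] [Ring R]
    (dx dy : K →+ K)
    (hdx : ∀ f g : K, dx (f * g) = f * dx g + dx f * g)
    (hdy : ∀ f g : K, dy (f * g) = f * dy g + dy f * g)
    (hcomm : ∀ f : K, dx (dy f) = dy (dx f))
    (φ : K →+* R) (Dx Dy : R)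
    (hDx : ∀ f : K, Dx * φ f = φ f * Dx + φ (dx f))
    (hDy : ∀ f : K, Dy * φ f = φ f * Dy + φ (dy f))
    (hD : Dx * Dy = Dy * Dx)
    (a b c : K) (hk : dy b + a * b - c ≠ 0)
    (d₁ d₂ : ℕ) (hd₁ : 1 ≤ d₁) (hd₂ : 1 ≤ d₂)
    (α β : ℕ → K) (m₀ : K) (hα : α d₁ ≠ 0) (hβ : β d₂ ≠ 0)
    (Mx My M L : R)
    (hMx : Mx = ∑ i ∈ Finset.range d₁, φ (α (i + 1)) * Dx ^ (i + 1))
    (hMy : My = ∑ j ∈ Finset.range d₂, φ (β (j + 1)) * Dy ^ (j + 1))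
    (hM : M = Mx + My + φ m₀)
    (hL : L = Dx * Dy + φ a * Dx + φ b * Dy + φ c) :
    ∃ (γ : ℕ → K) (r : K),
      γ (d₂ - 1) ≠ 0 ∧
      (M * (Dx + φ b) - (∑ j ∈ Finset.range d₂, φ (γ j) * Dy ^ j) * L
        = (Mx + φ m₀ + φ r) * (Dx + φ b)
          + (∑ j ∈ Finset.range d₂, φ (γ j) * Dy ^ j) * φ (dy b + a * b - c)) ∧
      ∃ (α' β' : ℕ → K) (m' : K),
        α' (d₁ + 1) ≠ 0 ∧ (1 ≤ d₂ - 1 → β' (d₂ - 1) ≠ 0) ∧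
        M * (Dx + φ b) - (∑ j ∈ Finset.range d₂, φ (γ j) * Dy ^ j) * L
          = φ m' + (∑ i ∈ Finset.range (d₁ + 1), φ (α' (i + 1)) * Dx ^ (i + 1))
              + (∑ j ∈ Finset.range (d₂ - 1), φ (β' (j + 1)) * Dy ^ (j + 1)) :=
  stmt10_general dx dy φ Dx Dy hDx hDy hD a b c hk d₁ d₂ hd₁ hd₂ α β m₀ hα hβ Mx My M L hMx hMy hM
    hL
end
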